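/- Let n₁, n₂, n₃ be positive integers, let A = A_d + j·A_c ∈ ℍ^{n₁×n₂×n₃} be a third-order quaternion tensor, and let Â be its mode-3 quaternion DFT. Then (F_{n₃} ⊗ I_{n₁}) · bcirc_z(A) · (F_{n₃}^* ⊗ I_{n₂}) = diag(Â), where F_{n₃}^* is the conjugate transpose of F_{n₃} and ⊗ is the Kronecker product (with the complex entries of F_{n₃} regarded as quaternions). -/

import Mathlib

open Matrix Kronecker

noncomputable section

/-- The real quaternions. -/
abbrev Quat := Quaternion ℝ

/-- The embedding of `ℂ` into the quaternions (via `1` and `i`). -/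
def c2q (z : ℂ) : Quat := ⟨z.re, z.im, 0, 0⟩

/-- The quaternion imaginary unit `j`. -/
def jH : Quat := ⟨0, 0, 1, 0⟩

/-- The first complex component of a quaternion: `q = c2q (qd q) + jH * c2q (qc q)`. -/
def qd (q : Quat) : ℂ := ⟨q.re, q.imI⟩

/-- The second complex component of a quaternion. -/
def qc (q : Quat) : ℂ := ⟨q.imJ, -q.imK⟩

/-- A third-order tensor, given by its family of frontal slices. -/
abbrev Tensor (α : Type*) (n₁ n₂ n₃ : ℕ) := Fin n₃ → Matrix (Fin n₁) (Fin n₂) α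

/-- The complex tensor `A_d` in the decomposition `A = A_d + j·A_c`. -/
def Td {n₁ n₂ n₃ : ℕ} (A : Tensor Quat n₁ n₂ n₃) : Tensor ℂ n₁ n₂ n₃ :=
  fun k i j => qd (A k i j)

/-- The complex tensor `A_c` in the decomposition `A = A_d + j·A_c`. -/
def Tc {n₁ n₂ n₃ : ℕ} (A : Tensor Quat n₁ n₂ n₃) : Tensor ℂ n₁ n₂ n₃ :=
  fun k i j => qc (A k i j)

/-- The normalized `n × n` DFT matrix (0-indexed). -/
def Fmat (n : ℕ) : Matrix (Fin n) (Fin n) ℂ :=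
  fun s t => (((Real.sqrt (n : ℝ)) : ℂ))⁻¹ *
    Complex.exp ((-2 * (Real.pi : ℂ) * Complex.I * ((s : ℕ) : ℂ) * ((t : ℕ) : ℂ)) / (n : ℂ))

/-- The flip permutation matrix `P_n` (0-indexed: `P_{s,t} = 1` iff `s + t ≡ 0 (mod n)`). -/
def Pmat (n : ℕ) : Matrix (Fin n) (Fin n) ℂ :=
  fun s t => if ((s : ℕ) + (t : ℕ)) % n = 0 then 1 else 0

/-- Left scalar multiplication of a quaternion matrix by a quaternion. -/
def lsmul {m n : Type*} (q : Quat) (M : Matrix m n Quat) : Matrix m n Quat :=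
  fun i j => q * M i j

/-- Right scalar multiplication of a quaternion matrix by a quaternion. -/
def rsmul {m n : Type*} (q : Quat) (M : Matrix m n Quat) : Matrix m n Quat :=
  fun i j => M i j * q

/-- The block circulant matrix of a third-order tensor. -/
def bcirc {α : Type*} {n₁ n₂ n₃ : ℕ} (T : Tensor α n₁ n₂ n₃) :
    Matrix (Fin n₃ × Fin n₁) (Fin n₃ × Fin n₂) α :=
  fun p q => T (p.1 - q.1) p.2 q.2

/-- The z-block circulant matrix `bcirc_z(A) = bcirc(A_d) + j·bcirc(A_c)·(P_{n₃} ⊗ I_{n₂})`. -/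
def bcircz {n₁ n₂ n₃ : ℕ} (A : Tensor Quat n₁ n₂ n₃) :
    Matrix (Fin n₃ × Fin n₁) (Fin n₃ × Fin n₂) Quat :=
  (bcirc (Td A)).map c2q +
    lsmul jH ((bcirc (Tc A) * (Pmat n₃ ⊗ₖ (1 : Matrix (Fin n₂) (Fin n₂) ℂ))).map c2q)

/-- `unfold`: stack the frontal slices vertically. -/
def unfoldT {α : Type*} {n₁ n₂ n₃ : ℕ} (T : Tensor α n₁ n₂ n₃) :
    Matrix (Fin n₃ × Fin n₁) (Fin n₂) α :=
  fun p j => T p.1 p.2 j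

/-- `fold`: the inverse of `unfold`. -/
def foldT {α : Type*} {n₁ n₂ n₃ : ℕ} (M : Matrix (Fin n₃ × Fin n₁) (Fin n₂) α) :
    Tensor α n₁ n₂ n₃ :=
  fun k i j => M (k, i) j

/-- The QT-product `A *_Q B = fold(bcirc_z(A)·unfold(B))`. -/
def qtmul {n₁ r n₂ n₃ : ℕ} (A : Tensor Quat n₁ r n₃) (B : Tensor Quat r n₂ n₃) :
    Tensor Quat n₁ n₂ n₃ :=
  foldT (bcircz A * unfoldT B)

/-- The mode-3 quaternion DFT
`Â(i,j,:) = √n₃·F_{n₃}·A_d(i,j,:) + j·√n₃·P_{n₃}·F_{n₃}·A_c(i,j,:)`, tube-wise. -/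
def hatT {n₁ n₂ n₃ : ℕ} (A : Tensor Quat n₁ n₂ n₃) : Tensor Quat n₁ n₂ n₃ :=
  fun k i j =>
    c2q (((Real.sqrt (n₃ : ℝ)) : ℂ) * ∑ t, Fmat n₃ k t * Td A t i j) +
    jH * c2q (((Real.sqrt (n₃ : ℝ)) : ℂ) * ∑ t, (Pmat n₃ * Fmat n₃) k t * Tc A t i j)

/-- `diag(Â)`: the block diagonal matrix with the frontal slices as diagonal blocks. -/
def blkDiag {α : Type*} [Zero α] {n₁ n₂ n₃ : ℕ} (T : Tensor α n₁ n₂ n₃) :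
    Matrix (Fin n₃ × Fin n₁) (Fin n₃ × Fin n₂) α :=
  fun p q => if p.1 = q.1 then T p.1 p.2 q.2 else 0

/-- Conjugate transpose of a complex tensor: conjugate-transpose each slice and
reverse the order of slices `2,…,n₃` (i.e. slice `k ↦ -k` in 0-indexing). -/
def cConjT {n₁ n₂ n₃ : ℕ} (T : Tensor ℂ n₁ n₂ n₃) : Tensor ℂ n₂ n₁ n₃ :=
  fun k => (T (-k))ᴴ

/-- Conjugate transpose of a quaternion tensor, defined by
`unfold(A*) = unfold(A_d*) − (P_{n₃} ⊗ I_{n₂})·unfold(A_c*)·j`. -/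
def tConjT {n₁ n₂ n₃ : ℕ} (A : Tensor Quat n₁ n₂ n₃) : Tensor Quat n₂ n₁ n₃ :=
  foldT ((unfoldT (cConjT (Td A))).map c2q -
    rsmul jH (((Pmat n₃ ⊗ₖ (1 : Matrix (Fin n₂) (Fin n₂) ℂ)) *
      unfoldT (cConjT (Tc A))).map c2q))

/-- The identity tensor: identity matrix as first frontal slice, zero elsewhere. -/
def idT (n n₃ : ℕ) : Tensor Quat n n n₃ :=
  fun k => if (k : ℕ) = 0 then (1 : Matrix (Fin n) (Fin n) Quat) else 0

/-- A quaternion tensor is unitary if `U* *_Q U = U *_Q U* = I`. -/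
def IsUnitaryT {n n₃ : ℕ} (U : Tensor Quat n n n₃) : Prop :=
  qtmul (tConjT U) U = idT n n₃ ∧ qtmul U (tConjT U) = idT n n₃

/-- A quaternion tensor is Hermitian if `H* = H`. -/
def IsHermitianT {n n₃ : ℕ} (H : Tensor Quat n n n₃) : Prop := tConjT H = H

/-- A quaternion matrix `M` is positive semidefinite if `x*·M·x` is a nonnegative
real number for every quaternion vector `x`. -/
def IsPSDMat {m : Type*} [Fintype m] (M : Matrix m m Quat) : Prop :=
  ∀ x : m → Quat, ∃ r : ℝ, 0 ≤ r ∧ (star x) ⬝ᵥ M.mulVec x = (r : Quat)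


section mylemmas
set_option linter.unusedVariables false
set_option linter.unreachableTactic false
set_option linter.unusedTactic false

def c2qHom : ℂ →+* Quat where
  toFun := c2q
  map_one' := by ext <;> simp [c2q, Quaternion.re_one, Quaternion.imI_one, Quaternion.imJ_one, Quaternion.imK_one]
  map_mul' a b := by
    ext <;> simp only [Quaternion.re_mul, Quaternion.imI_mul, Quaternion.imJ_mul, Quaternion.imK_mul] <;> simp [c2q, Quaternion.ext_iff] <;> ring
  map_zero' := by ext <;> simp [c2q, Quaternion.re_zero, Quaternion.imI_zero, Quaternion.imJ_zero, Quaternion.imK_zero]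
  map_add' a b := by ext <;> simp only [Quaternion.re_add, Quaternion.imI_add, Quaternion.imJ_add, Quaternion.imK_add] <;> simp [c2q]

lemma jH_mul_c2q (z : ℂ) : jH * c2q z = c2q (starRingEnd ℂ z) * jH := by
  ext <;> simp only [Quaternion.re_mul, Quaternion.imI_mul, Quaternion.imJ_mul, Quaternion.imK_mul] <;> simp [c2q, jH] <;> ring

lemma c2q_mul_jH (z : ℂ) : c2q z * jH = jH * c2q (starRingEnd ℂ z) := by
  ext <;> simp only [Quaternion.re_mul, Quaternion.imI_mul, Quaternion.imJ_mul, Quaternion.imK_mul] <;> simp [c2q, jH] <;> ring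

lemma c2q_mul (a b : ℂ) : c2q (a * b) = c2q a * c2q b := map_mul c2qHom a b
lemma c2q_add (a b : ℂ) : c2q (a + b) = c2q a + c2q b := map_add c2qHom a b
lemma c2q_zero : c2q 0 = 0 := map_zero c2qHom
lemma c2q_sum {ι : Type*} (s : Finset ι) (f : ι → ℂ) :
    c2q (∑ x ∈ s, f x) = ∑ x ∈ s, c2q (f x) := map_sum c2qHom f s

section helpers
variable {n : ℕ}

lemma val_add_mod (h : 0 < n) (x y : Fin n) :
    (((x + y : Fin n) : ℕ) : ℤ) % n = (((x:ℕ):ℤ) + ((y:ℕ):ℤ)) % n := by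
  have hx := x.isLt; have hy := y.isLt
  rw [Fin.val_add]
  push_cast
  exact Int.emod_emod_of_dvd _ dvd_rfl

lemma val_sub_mod (h : 0 < n) (x y : Fin n) :
    (((x - y : Fin n) : ℕ) : ℤ) % n = (((x:ℕ):ℤ) - ((y:ℕ):ℤ)) % n := by
  have hx := x.isLt; have hy := y.isLt
  rw [Fin.sub_def]
  simp only [Fin.val_mk]
  push_cast [Nat.cast_sub hy.le]
  rw [Int.emod_emod_of_dvd _ dvd_rfl,
    show (n:ℤ) - ((y:ℕ):ℤ) + ((x:ℕ):ℤ) = (((x:ℕ):ℤ) - ((y:ℕ):ℤ)) + (n:ℤ) * 1 by ring,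
    Int.add_mul_emod_self_left]

lemma val_neg_mod (h : 0 < n) (x : Fin n) :
    (((-x : Fin n) : ℕ) : ℤ) % n = (-((x:ℕ):ℤ)) % n := by
  have hx := x.isLt
  rw [Fin.neg_def]
  simp only [Fin.val_mk]
  push_cast [Nat.cast_sub hx.le]
  rw [Int.emod_emod_of_dvd _ dvd_rfl,
    show (n:ℤ) - ((x:ℕ):ℤ) = (-((x:ℕ):ℤ)) + (n:ℤ) * 1 by ring,
    Int.add_mul_emod_self_left]

lemma sub_dvd_iff (h : 0 < n) (k l : Fin n) :
    (n:ℤ) ∣ (((k:ℕ):ℤ) - ((l:ℕ):ℤ)) ↔ k = l := by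
  have hk := k.isLt; have hl := l.isLt
  constructor
  · intro hd
    have h0 : ((k:ℕ):ℤ) - ((l:ℕ):ℤ) = 0 := by
      refine Int.eq_zero_of_abs_lt_dvd hd ?_
      rw [abs_lt]; omega
    exact Fin.ext (by omega)
  · rintro rfl; simp

lemma Pmat_apply (h : 0 < n) (u t : Fin n) :
    Pmat n u t = if t = -u then 1 else 0 := by
  have hu := u.isLt; have ht := t.isLt
  rw [Pmat]
  congr 1
  simp only [eq_iff_iff, Fin.ext_iff, Fin.neg_def, Fin.val_mk]
  have hr : ((u:ℕ) ≠ 0 ∧ (n - (u:ℕ)) % n = n - (u:ℕ)) ∨ ((u:ℕ) = 0 ∧ (n - (u:ℕ)) % n = 0) := by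
    by_cases hu0 : (u:ℕ) = 0
    · right; exact ⟨hu0, by simp [hu0]⟩
    · left; exact ⟨hu0, Nat.mod_eq_of_lt (by omega)⟩
  have hl : (((u:ℕ) + t) % n = (u:ℕ) + t ∧ (u:ℕ) + t < n) ∨
      (((u:ℕ) + t) % n = (u:ℕ) + t - n ∧ n ≤ (u:ℕ) + t) := by
    rcases Nat.lt_or_ge ((u:ℕ)+t) n with hlt|hge
    · left; exact ⟨Nat.mod_eq_of_lt hlt, hlt⟩
    · right; rw [Nat.mod_eq_sub_mod hge, Nat.mod_eq_of_lt (by omega)]; exact ⟨rfl, hge⟩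
  rcases hr with ⟨hu0,hr⟩|⟨h0,hr⟩ <;> rcases hl with ⟨hl,hb⟩|⟨hl,hb⟩ <;> rw [hr, hl] <;> omega
end helpers


def zeta (n : ℕ) : ℂ := Complex.exp (-(2 * (Real.pi:ℂ) * Complex.I) / n)

lemma zeta_prim {n : ℕ} (h : 0 < n) : IsPrimitiveRoot (zeta n) n := by
  have h1 := (Complex.isPrimitiveRoot_exp n h.ne').inv
  have : zeta n = (Complex.exp (2 * Real.pi * Complex.I / n))⁻¹ := by
    rw [← Complex.exp_neg, zeta, neg_div]
  rwa [this]

lemma zeta_ne (n : ℕ) : zeta n ≠ 0 := Complex.exp_ne_zero _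

lemma zeta_congr {n : ℕ} (h : 0 < n) {a b : ℤ} (hab : a % (n:ℤ) = b % (n:ℤ)) :
    zeta n ^ a = zeta n ^ b := by
  obtain ⟨q, hq⟩ : (n:ℤ) ∣ b - a := (Int.ModEq.dvd (hab : Int.ModEq n a b))
  have hb : b = a + n * q := by omega
  rw [hb, zpow_add₀ (zeta_ne n), _root_.zpow_mul, zpow_natCast, (zeta_prim h).pow_eq_one,
    _root_.one_zpow, mul_one]

lemma conj_zeta_zpow (n : ℕ) (m : ℤ) :
    (starRingEnd ℂ) (zeta n ^ m) = zeta n ^ (-m) := by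
  have hc : (starRingEnd ℂ) (zeta n) = (zeta n)⁻¹ := by
    rw [zeta, ← Complex.exp_conj, ← Complex.exp_neg]
    congr 1
    simp [Complex.conj_I, map_ofNat]
    ring
  rw [map_zpow₀, hc, _root_.inv_zpow, ← _root_.zpow_neg]

lemma zeta_sum {n : ℕ} (h : 0 < n) (m : ℤ) :
    ∑ t : Fin n, zeta n ^ (m * (t:ℕ)) = if (n:ℤ) ∣ m then (n:ℂ) else 0 := by
  have hterm : ∀ t : Fin n, zeta n ^ (m * (t:ℕ)) = (zeta n ^ m) ^ (t:ℕ) := fun t => by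
    rw [_root_.zpow_mul, zpow_natCast]
  simp only [hterm]
  rw [Fin.sum_univ_eq_sum_range (fun i => (zeta n ^ m) ^ i)]
  by_cases hd : (n:ℤ) ∣ m
  · rw [if_pos hd, ((zeta_prim h).zpow_eq_one_iff_dvd m).mpr hd]
    simp
  · rw [if_neg hd]
    have hne : zeta n ^ m ≠ 1 := fun he => hd (((zeta_prim h).zpow_eq_one_iff_dvd m).mp he)
    rw [geom_sum_eq hne]
    have : (zeta n ^ m) ^ n = 1 := by
      rw [← zpow_natCast (zeta n ^ m), ← _root_.zpow_mul, mul_comm, _root_.zpow_mul, zpow_natCast,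
        (zeta_prim h).pow_eq_one, _root_.one_zpow]
    rw [this]; simp

lemma Fmat_eq {n : ℕ} (h : 0 < n) (k s : Fin n) :
    Fmat n k s = (((Real.sqrt n):ℂ))⁻¹ * zeta n ^ (((k:ℕ) * (s:ℕ) : ℕ) : ℤ) := by
  rw [Fmat, zpow_natCast, zeta, ← Complex.exp_nat_mul]
  congr 2
  push_cast
  ring

section core
variable {n : ℕ}

lemma sqrtC_ne (h : 0 < n) : ((Real.sqrt n : ℝ) : ℂ) ≠ 0 := by
  simp only [ne_eq, Complex.ofReal_eq_zero]
  positivity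

lemma sqrtC_sq (h : 0 < n) : ((Real.sqrt n : ℝ) : ℂ) * ((Real.sqrt n : ℝ) : ℂ) = (n : ℂ) := by
  rw [← Complex.ofReal_mul, Real.mul_self_sqrt (by positivity)]
  norm_cast

lemma Fmat_conj (h : 0 < n) (l t : Fin n) :
    (starRingEnd ℂ) (Fmat n l t)
      = (((Real.sqrt n : ℝ)):ℂ)⁻¹ * zeta n ^ (-((((l:ℕ) * (t:ℕ) : ℕ)) : ℤ)) := by
  rw [Fmat_eq h, _root_.map_mul, ← conj_zeta_zpow, map_inv₀, Complex.conj_ofReal]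

/-- inner sum for I1 -/
lemma key1 (h : 0 < n) (k l u : Fin n) :
    ∑ t : Fin n, Fmat n k (t + u) * (starRingEnd ℂ) (Fmat n l t)
      = if k = l then ((Real.sqrt n : ℝ):ℂ) * Fmat n k u else 0 := by
  have step : ∀ t : Fin n, Fmat n k (t + u) * (starRingEnd ℂ) (Fmat n l t)
      = (((Real.sqrt n:ℝ):ℂ)⁻¹ * ((Real.sqrt n:ℝ):ℂ)⁻¹
          * zeta n ^ ((((k:ℕ) * (u:ℕ) : ℕ)) : ℤ))
        * zeta n ^ ((((k:ℕ):ℤ) - ((l:ℕ):ℤ)) * ((t:ℕ):ℤ)) := by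
    intro t
    rw [Fmat_eq h, Fmat_conj h]
    have hcg : zeta n ^ ((((k:ℕ) * (((t + u : Fin n):ℕ)) : ℕ)) : ℤ)
        = zeta n ^ (((k:ℕ):ℤ) * (((t:ℕ):ℤ) + ((u:ℕ):ℤ))) := by
      apply zeta_congr h
      push_cast
      calc ((k:ℕ):ℤ) * (((t + u : Fin n):ℕ):ℤ) % n
          = ((k:ℕ):ℤ) % n * ((((t + u : Fin n):ℕ):ℤ) % n) % n := by
            rw [Int.mul_emod]
        _ = ((k:ℕ):ℤ) % n * (((((t:ℕ):ℤ) + ((u:ℕ):ℤ))) % n) % n := by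
            rw [val_add_mod h]
        _ = ((k:ℕ):ℤ) * (((t:ℕ):ℤ) + ((u:ℕ):ℤ)) % n := by
            rw [← Int.mul_emod]
    rw [hcg, mul_mul_mul_comm, ← zpow_add₀ (zeta_ne n),
      show ((k:ℕ):ℤ) * (((t:ℕ):ℤ) + ((u:ℕ):ℤ)) + (-((((l:ℕ) * (t:ℕ) : ℕ)) : ℤ))
          = ((((k:ℕ) * (u:ℕ) : ℕ)) : ℤ) + ((((k:ℕ):ℤ) - ((l:ℕ):ℤ)) * ((t:ℕ):ℤ)) from by
        push_cast; ring,
      zpow_add₀ (zeta_ne n)]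
    ring
  rw [Finset.sum_congr rfl (fun t _ => step t), ← Finset.mul_sum, zeta_sum h]
  by_cases hkl : k = l
  · rw [if_pos ((sub_dvd_iff h k l).mpr hkl), if_pos hkl, Fmat_eq h]
    have h3 : (((Real.sqrt n:ℝ):ℂ))⁻¹ * (((Real.sqrt n:ℝ):ℂ))⁻¹ * (n:ℂ) = 1 := by
      rw [← mul_inv, sqrtC_sq h]
      exact inv_mul_cancel₀ (by exact_mod_cast h.ne')
    calc ((Real.sqrt n:ℝ):ℂ)⁻¹ * ((Real.sqrt n:ℝ):ℂ)⁻¹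
            * zeta n ^ ((((k:ℕ) * (u:ℕ) : ℕ)) : ℤ) * (n:ℂ)
        = (((Real.sqrt n:ℝ):ℂ)⁻¹ * ((Real.sqrt n:ℝ):ℂ)⁻¹ * (n:ℂ))
            * zeta n ^ ((((k:ℕ) * (u:ℕ) : ℕ)) : ℤ) := by ring
      _ = zeta n ^ ((((k:ℕ) * (u:ℕ) : ℕ)) : ℤ) := by rw [h3, one_mul]
      _ = ((Real.sqrt n:ℝ):ℂ) * (((Real.sqrt n:ℝ):ℂ)⁻¹
            * zeta n ^ ((((k:ℕ) * (u:ℕ) : ℕ)) : ℤ)) := by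
          rw [← mul_assoc, mul_inv_cancel₀ (sqrtC_ne h), one_mul]
  · rw [if_neg (fun hd => hkl ((sub_dvd_iff h k l).mp hd)), if_neg hkl, mul_zero]

lemma I1 {n₁ n₂ : ℕ} (h : 0 < n) (T : Fin n → Matrix (Fin n₁) (Fin n₂) ℂ)
    (i : Fin n₁) (j : Fin n₂) (k l : Fin n) :
    ∑ s : Fin n, ∑ t : Fin n, Fmat n k s * T (s - t) i j * (starRingEnd ℂ) (Fmat n l t)
      = if k = l then ((Real.sqrt n : ℝ):ℂ) * ∑ u, Fmat n k u * T u i j else 0 := by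
  haveI : NeZero n := ⟨h.ne'⟩
  rw [Finset.sum_comm]
  have hre : ∀ t : Fin n,
      ∑ s : Fin n, Fmat n k s * T (s - t) i j * (starRingEnd ℂ) (Fmat n l t)
      = ∑ u : Fin n, Fmat n k (t + u) * T u i j * (starRingEnd ℂ) (Fmat n l t) := by
    intro t
    rw [← Equiv.sum_comp (Equiv.addLeft t)
      (fun s => Fmat n k s * T (s - t) i j * (starRingEnd ℂ) (Fmat n l t))]
    exact Finset.sum_congr rfl fun u _ => by
      simp only [Equiv.coe_addLeft, add_sub_cancel_left]
  rw [Finset.sum_congr rfl (fun t _ => hre t), Finset.sum_comm]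
  have hfin : ∀ u : Fin n,
      ∑ t : Fin n, Fmat n k (t + u) * T u i j * (starRingEnd ℂ) (Fmat n l t)
      = (if k = l then ((Real.sqrt n : ℝ):ℂ) * Fmat n k u else 0) * T u i j := by
    intro u
    rw [← key1 h k l u, Finset.sum_mul]
    exact Finset.sum_congr rfl fun t _ => by ring
  rw [Finset.sum_congr rfl (fun u _ => hfin u)]
  by_cases hkl : k = l
  · simp only [if_pos hkl, Finset.mul_sum]
    exact Finset.sum_congr rfl fun u _ => by ring
  · simp [if_neg hkl]
end core

section core2
variable {n : ℕ}

lemma PF (h : 0 < n) (k u : Fin n) : (Pmat n * Fmat n) k u = Fmat n (-k) u := by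
  rw [Matrix.mul_apply, Finset.sum_congr rfl (fun v _ => by rw [Pmat_apply h k v])]
  simp

lemma key2 (h : 0 < n) (k l u : Fin n) :
    ∑ t : Fin n, (starRingEnd ℂ) (Fmat n k (u - t)) * (starRingEnd ℂ) (Fmat n l t)
      = if k = l then ((Real.sqrt n : ℝ):ℂ) * Fmat n (-k) u else 0 := by
  have step : ∀ t : Fin n,
      (starRingEnd ℂ) (Fmat n k (u - t)) * (starRingEnd ℂ) (Fmat n l t)
      = (((Real.sqrt n:ℝ):ℂ)⁻¹ * ((Real.sqrt n:ℝ):ℂ)⁻¹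
          * zeta n ^ (-(((k:ℕ):ℤ) * ((u:ℕ):ℤ))))
        * zeta n ^ ((((k:ℕ):ℤ) - ((l:ℕ):ℤ)) * ((t:ℕ):ℤ)) := by
    intro t
    rw [Fmat_conj h, Fmat_conj h]
    have hcg : zeta n ^ (-((((k:ℕ) * (((u - t : Fin n):ℕ)) : ℕ)) : ℤ))
        = zeta n ^ (-(((k:ℕ):ℤ) * (((u:ℕ):ℤ) - ((t:ℕ):ℤ)))) := by
      apply zeta_congr h
      have h1 : Int.ModEq n (((u - t : Fin n):ℕ):ℤ) (((u:ℕ):ℤ) - ((t:ℕ):ℤ)) :=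
        val_sub_mod h u t
      have h2 := (h1.mul_left ((k:ℕ):ℤ)).neg
      push_cast
      exact h2
    rw [hcg, mul_mul_mul_comm, ← zpow_add₀ (zeta_ne n),
      show -(((k:ℕ):ℤ) * (((u:ℕ):ℤ) - ((t:ℕ):ℤ))) + (-((((l:ℕ) * (t:ℕ) : ℕ)) : ℤ))
          = -(((k:ℕ):ℤ) * ((u:ℕ):ℤ)) + ((((k:ℕ):ℤ) - ((l:ℕ):ℤ)) * ((t:ℕ):ℤ)) from by
        push_cast; ring,
      zpow_add₀ (zeta_ne n)]
    ring
  rw [Finset.sum_congr rfl (fun t _ => step t), ← Finset.mul_sum, zeta_sum h]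
  by_cases hkl : k = l
  · rw [if_pos ((sub_dvd_iff h k l).mpr hkl), if_pos hkl, Fmat_eq h]
    have hcg2 : zeta n ^ (((((-k : Fin n):ℕ) * (u:ℕ) : ℕ)) : ℤ)
        = zeta n ^ (-(((k:ℕ):ℤ) * ((u:ℕ):ℤ))) := by
      apply zeta_congr h
      have h1 : Int.ModEq n ((((-k : Fin n):ℕ)):ℤ) (-((k:ℕ):ℤ)) := val_neg_mod h k
      have h2 := h1.mul_right ((u:ℕ):ℤ)
      push_cast
      rw [show (-(((k:ℕ):ℤ) * ((u:ℕ):ℤ))) = (-((k:ℕ):ℤ)) * ((u:ℕ):ℤ) by ring]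
      exact h2
    rw [hcg2]
    have h3 : (((Real.sqrt n:ℝ):ℂ))⁻¹ * (((Real.sqrt n:ℝ):ℂ))⁻¹ * (n:ℂ) = 1 := by
      rw [← mul_inv, sqrtC_sq h]
      exact inv_mul_cancel₀ (by exact_mod_cast h.ne')
    calc ((Real.sqrt n:ℝ):ℂ)⁻¹ * ((Real.sqrt n:ℝ):ℂ)⁻¹
            * zeta n ^ (-(((k:ℕ):ℤ) * ((u:ℕ):ℤ))) * (n:ℂ)
        = (((Real.sqrt n:ℝ):ℂ)⁻¹ * ((Real.sqrt n:ℝ):ℂ)⁻¹ * (n:ℂ))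
            * zeta n ^ (-(((k:ℕ):ℤ) * ((u:ℕ):ℤ))) := by ring
      _ = zeta n ^ (-(((k:ℕ):ℤ) * ((u:ℕ):ℤ))) := by rw [h3, one_mul]
      _ = ((Real.sqrt n:ℝ):ℂ) * (((Real.sqrt n:ℝ):ℂ)⁻¹
            * zeta n ^ (-(((k:ℕ):ℤ) * ((u:ℕ):ℤ)))) := by
          rw [← mul_assoc, mul_inv_cancel₀ (sqrtC_ne h), one_mul]
  · rw [if_neg (fun hd => hkl ((sub_dvd_iff h k l).mp hd)), if_neg hkl, mul_zero]

lemma I2 {n₁ n₂ : ℕ} (h : 0 < n) (T : Fin n → Matrix (Fin n₁) (Fin n₂) ℂ)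
    (i : Fin n₁) (j : Fin n₂) (k l : Fin n) :
    ∑ s : Fin n, ∑ t : Fin n,
        (starRingEnd ℂ) (Fmat n k s) * T (s + t) i j * (starRingEnd ℂ) (Fmat n l t)
      = if k = l then ((Real.sqrt n : ℝ):ℂ) * ∑ u, (Pmat n * Fmat n) k u * T u i j else 0 := by
  haveI : NeZero n := ⟨h.ne'⟩
  rw [Finset.sum_comm]
  have hre : ∀ t : Fin n,
      ∑ s : Fin n, (starRingEnd ℂ) (Fmat n k s) * T (s + t) i j * (starRingEnd ℂ) (Fmat n l t)
      = ∑ u : Fin n,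
          (starRingEnd ℂ) (Fmat n k (u - t)) * T u i j * (starRingEnd ℂ) (Fmat n l t) := by
    intro t
    rw [← Equiv.sum_comp (Equiv.subRight t)
      (fun s => (starRingEnd ℂ) (Fmat n k s) * T (s + t) i j * (starRingEnd ℂ) (Fmat n l t))]
    exact Finset.sum_congr rfl fun u _ => by
      simp only [Equiv.subRight_apply, sub_add_cancel]
  rw [Finset.sum_congr rfl (fun t _ => hre t), Finset.sum_comm]
  have hfin : ∀ u : Fin n,
      ∑ t : Fin n,
          (starRingEnd ℂ) (Fmat n k (u - t)) * T u i j * (starRingEnd ℂ) (Fmat n l t)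
      = (if k = l then ((Real.sqrt n : ℝ):ℂ) * Fmat n (-k) u else 0) * T u i j := by
    intro u
    rw [← key2 h k l u, Finset.sum_mul]
    exact Finset.sum_congr rfl fun t _ => by ring
  rw [Finset.sum_congr rfl (fun u _ => hfin u)]
  by_cases hkl : k = l
  · simp only [if_pos hkl, Finset.mul_sum]
    exact Finset.sum_congr rfl fun u _ => by rw [PF h]; ring
  · simp [if_neg hkl]
end core2

lemma qterm (z w D C : ℂ) :
    c2q z * (c2q D + jH * c2q C) * c2q w
      = c2q (z * D * w) + jH * c2q ((starRingEnd ℂ) z * C * w) := by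
  ext <;> simp only [Quaternion.re_mul, Quaternion.imI_mul, Quaternion.imJ_mul, Quaternion.imK_mul, Quaternion.re_add, Quaternion.imI_add, Quaternion.imJ_add, Quaternion.imK_add] <;> simp [c2q, jH, Complex.mul_re, Complex.mul_im] <;> ring

lemma bcircz_apply {n₁ n₂ n₃ : ℕ} (h₃ : 0 < n₃) (A : Tensor Quat n₁ n₂ n₃)
    (s : Fin n₃) (a : Fin n₁) (t : Fin n₃) (b : Fin n₂) :
    bcircz A (s, a) (t, b) = c2q (Td A (s - t) a b) + jH * c2q (Tc A (s + t) a b) := by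
  haveI : NeZero n₃ := ⟨h₃.ne'⟩
  rw [bcircz]
  simp only [Matrix.add_apply, Matrix.map_apply, lsmul, bcirc]
  congr 2
  rw [Matrix.mul_apply, Fintype.sum_prod_type]
  simp only [kroneckerMap_apply, Matrix.one_apply, Pmat_apply h₃, mul_ite, ite_mul,
    mul_zero, zero_mul, mul_one, one_mul]
  have hcond : ∀ x : Fin n₃, (t = -x) = (x = -t) := fun x =>
    propext ⟨fun h => by rw [h, neg_neg], fun h => by rw [h, neg_neg]⟩
  simp only [hcond, Finset.sum_ite_eq', Finset.mem_univ, if_true]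
  simp [bcirc, sub_neg_eq_add]

end mylemmas

/-- block-diagonalization of the z-block circulant matrix:
`(F_{n₃} ⊗ I_{n₁}) · bcirc_z(A) · (F_{n₃}* ⊗ I_{n₂}) = diag(Â)`. -/
theorem stmt0 {n₁ n₂ n₃ : ℕ} (h₁ : 0 < n₁) (h₂ : 0 < n₂) (h₃ : 0 < n₃)
    (A : Tensor Quat n₁ n₂ n₃) :
    ((Fmat n₃).map c2q ⊗ₖ (1 : Matrix (Fin n₁) (Fin n₁) Quat)) * bcircz A *
      (((Fmat n₃)ᴴ).map c2q ⊗ₖ (1 : Matrix (Fin n₂) (Fin n₂) Quat)) =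
    blkDiag (hatT A) := by
  haveI : NeZero n₃ := ⟨h₃.ne'⟩
  refine Matrix.ext fun p q => ?_
  obtain ⟨k, i⟩ := p
  obtain ⟨l, j⟩ := q
  simp only [Matrix.mul_apply, Fintype.sum_prod_type, kroneckerMap_apply, Matrix.map_apply,
    Matrix.one_apply, conjTranspose_apply, Complex.star_def, Finset.sum_mul, mul_ite, ite_mul,
    mul_zero, zero_mul, mul_one, one_mul, Finset.sum_ite_irrel, Finset.sum_ite_eq,
    Finset.sum_ite_eq', Finset.mem_univ, if_true]
  rw [Finset.sum_comm]
  rw [Finset.sum_congr rfl (fun s _ => Finset.sum_congr rfl (fun t _ => by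
    rw [bcircz_apply h₃, qterm]))]
  rw [Finset.sum_congr rfl (fun s _ => Finset.sum_add_distrib), Finset.sum_add_distrib]
  rw [show (∑ s : Fin n₃, ∑ t : Fin n₃,
        jH * c2q ((starRingEnd ℂ) (Fmat n₃ k s) * Tc A (s + t) i j
          * (starRingEnd ℂ) (Fmat n₃ l t)))
      = jH * c2q (∑ s : Fin n₃, ∑ t : Fin n₃,
          (starRingEnd ℂ) (Fmat n₃ k s) * Tc A (s + t) i j
            * (starRingEnd ℂ) (Fmat n₃ l t)) from by
    rw [c2q_sum, Finset.mul_sum]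
    exact Finset.sum_congr rfl fun s _ => by rw [c2q_sum, Finset.mul_sum]]
  rw [show (∑ s : Fin n₃, ∑ t : Fin n₃,
        c2q (Fmat n₃ k s * Td A (s - t) i j * (starRingEnd ℂ) (Fmat n₃ l t)))
      = c2q (∑ s : Fin n₃, ∑ t : Fin n₃,
          Fmat n₃ k s * Td A (s - t) i j * (starRingEnd ℂ) (Fmat n₃ l t)) from by
    rw [c2q_sum]
    exact Finset.sum_congr rfl fun s _ => (c2q_sum _ _).symm]
  rw [I1 h₃ (Td A) i j k l, I2 h₃ (Tc A) i j k l, blkDiag, hatT]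
  by_cases hkl : k = l
  · simp only [if_pos hkl]
  · simp only [if_neg hkl, c2q_zero, mul_zero, add_zero]

end
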